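/- Let A be a commutative Noetherian ring, 𝔞 an ideal, and M a finitely generated A-module such that 𝔞M ≠ 0 but 𝔞ⁿM = 0 for some n. Then there exists a maximal ideal 𝔪 ⊇ 𝔞 and an integer n such that the image of 𝔞M in M/𝔪ⁿM is nonzero; in particular, the Artinian quotient S = A/𝔪ⁿ has the property that 𝔞(M ⊗_A S) ≠ 0. -/

import Mathlib

/-!
Pick a nonzero `x ∈ I • M` and a maximal ideal `𝔪` containing its annihilator. By the Krull
intersection theorem, `x ∈ ⋂ₙ 𝔪 ^ n • M` would give `r ∈ 𝔪` with `(1 - r) • x = 0`, i.e.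
`1 - r ∈ 𝔪`, which is absurd; so `x ∉ 𝔪 ^ n • M` for some `n`. Since `I ^ k` kills `x`, the
prime `𝔪` contains `I ^ k` and hence `I`.
-/

section

variable {A M : Type*} [CommRing A] [AddCommGroup M] [Module A M]

theorem Ideal.le_torsionOf_of_smul_top_eq_bot {I : Ideal A}
    (hI : I • (⊤ : Submodule A M) = ⊥) (x : M) : I ≤ Ideal.torsionOf A M x := fun a ha =>
  (Ideal.mem_torsionOf_iff x a).mpr <| by
    simpa [hI] using Submodule.smul_mem_smul ha (Submodule.mem_top : x ∈ ⊤)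

theorem Submodule.smul_top_quotient_eq_bot_iff (I : Ideal A) (N : Submodule A M) :
    I • (⊤ : Submodule A (M ⧸ N)) = ⊥ ↔ I • (⊤ : Submodule A M) ≤ N := by
  have hmap : (I • ⊤ : Submodule A M).map N.mkQ = I • ⊤ := by
    rw [Submodule.map_smul'', Submodule.map_top, Submodule.range_mkQ]
  rw [← hmap, ← LinearMap.le_ker_iff_map, Submodule.ker_mkQ]

theorem Ideal.notMem_iInf_pow_smul_top [IsNoetherianRing A] [Module.Finite A M] {𝔪 : Ideal A}
    (h𝔪 : 𝔪 ≠ ⊤) {x : M} (hx : Ideal.torsionOf A M x ≤ 𝔪) :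
    x ∉ (⨅ i : ℕ, 𝔪 ^ i • ⊤ : Submodule A M) := by
  rw [Ideal.mem_iInf_smul_pow_eq_bot_iff]
  rintro ⟨⟨r, hr𝔪⟩, hrx⟩
  have h1r : 1 - r ∈ Ideal.torsionOf A M x := by
    rw [Ideal.mem_torsionOf_iff, sub_smul, one_smul, hrx, sub_self]
  exact h𝔪 <| (Ideal.eq_top_iff_one _).mpr <| by simpa using 𝔪.add_mem (hx h1r) hr𝔪

theorem exists_isMaximal_notMem_pow_smul_top [IsNoetherianRing A] [Module.Finite A M] {x : M}
    (hx : x ≠ 0) : ∃ 𝔪 : Ideal A, 𝔪.IsMaximal ∧ Ideal.torsionOf A M x ≤ 𝔪 ∧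
      ∃ n : ℕ, x ∉ 𝔪 ^ n • (⊤ : Submodule A M) := by
  obtain ⟨𝔪, h𝔪, hx𝔪⟩ :=
    Ideal.exists_le_maximal _ (mt (Ideal.torsionOf_eq_top_iff A x).mp hx)
  have hnotMem := Ideal.notMem_iInf_pow_smul_top h𝔪.ne_top hx𝔪
  rw [Submodule.mem_iInf, not_forall] at hnotMem
  exact ⟨𝔪, h𝔪, hx𝔪, hnotMem⟩

end

/-- Let `A` be a commutative Noetherian ring, `I` an ideal, and `M` a finitely
generated `A`-module such that `I • M ≠ 0` but `I ^ n • M = 0` for some `n`.  Then there exists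
a maximal ideal `𝔪 ⊇ I` and an integer `n` such that the image of `I • M` in `M / 𝔪 ^ n • M` is
nonzero; in particular the Artinian quotient `A / 𝔪 ^ n` has the property that
`I • (M ⊗ A/𝔪ⁿ) ≠ 0`, which we express by saying that `I` acts nontrivially on the quotient
module `M ⧸ 𝔪 ^ n • M`. -/
theorem statement0 {A : Type*} [CommRing A] [IsNoetherianRing A]
    (I : Ideal A) (M : Type*) [AddCommGroup M] [Module A M] [Module.Finite A M]
    (h1 : I • (⊤ : Submodule A M) ≠ ⊥)
    (h2 : ∃ n : ℕ, I ^ n • (⊤ : Submodule A M) = ⊥) :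
    ∃ 𝔪 : Ideal A, 𝔪.IsMaximal ∧ I ≤ 𝔪 ∧
      ∃ n : ℕ, ¬ (I • (⊤ : Submodule A M) ≤ 𝔪 ^ n • (⊤ : Submodule A M)) ∧
        I • (⊤ : Submodule A (M ⧸ (𝔪 ^ n • (⊤ : Submodule A M)))) ≠ ⊥ := by
  obtain ⟨k, hk⟩ := h2
  obtain ⟨x, hxI, hx0⟩ := (Submodule.ne_bot_iff _).mp h1
  obtain ⟨𝔪, h𝔪, hx𝔪, n, hxn⟩ := exists_isMaximal_notMem_pow_smul_top (A := A) hx0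
  have hI𝔪 : I ≤ 𝔪 :=
    h𝔪.isPrime.le_of_pow_le ((Ideal.le_torsionOf_of_smul_top_eq_bot hk x).trans hx𝔪)
  have hnotLe : ¬ I • (⊤ : Submodule A M) ≤ 𝔪 ^ n • ⊤ := fun hle => hxn (hle hxI)
  exact ⟨𝔪, h𝔪, hI𝔪, n, hnotLe, mt (Submodule.smul_top_quotient_eq_bot_iff _ _).mp hnotLe⟩
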